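/- arXiv:2303.07092 — 3 statements merged into one kernel-verified Lean document; each statement's English description precedes it below -/
import Mathlib

section
/- Let K ⊆ X be such that deg/m is bounded on K, where deg(x) = ∑_y b(x,y) and m: X → (0,∞). Then there exists C ≥ 0 such that Q(f·1_K) ≤ C ∑_{x∈K} |f(x)|^p m(x) for all f: X → ℝ. -/
open ENNReal Filter Topology

/-- The `p`-energy functional of a weighted graph, with values in `[0,∞]`. -/
noncomputable def energy {X : Type*} (b : X → X → ℝ) (p : ℝ) (f : X → ℝ) : ℝ≥0∞ :=
  ENNReal.ofReal (1 / p) * ∑' z : X × X, ENNReal.ofReal (b z.1 z.2 * |f z.1 - f z.2| ^ p)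

private lemma real_rpow_key {p : ℝ} (hp : 1 ≤ p) (a c : ℝ) :
    |a - c| ^ p ≤ 2 ^ (p - 1) * (|a| ^ p + |c| ^ p) := by
  have h1 : |a - c| ^ p ≤ (|a| + |c|) ^ p := by
    apply Real.rpow_le_rpow (abs_nonneg _) _ (zero_le_one.trans hp)
    calc |a - c| = |a + (-c)| := by ring_nf
      _ ≤ |a| + |(-c)| := abs_add_le _ _
      _ = |a| + |c| := by rw [abs_neg]
  refine h1.trans ?_
  have h := NNReal.rpow_add_le_mul_rpow_add_rpow ‖a‖₊ ‖c‖₊ hp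
  have h2 := (NNReal.coe_le_coe.2 h)
  push_cast at h2
  simpa [Real.norm_eq_abs] using h2

/-- If `deg/m` is bounded on `K`, then `Q(f·1_K) ≤ C ∑_{x ∈ K} |f(x)|^p m(x)`. -/
theorem energy_indicator_le {X : Type*} [Countable X] (b : X → X → ℝ) (p : ℝ)
    (hb_symm : ∀ x y, b x y = b y x) (hb_nonneg : ∀ x y, 0 ≤ b x y)
    (hb_diag : ∀ x, b x x = 0) (hb_sum : ∀ x, Summable fun y => b x y)
    (hp : 1 ≤ p) (m : X → ℝ) (hm : ∀ x, 0 < m x)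
    (K : Set X) (B : ℝ) (hB : ∀ x ∈ K, (∑' y, b x y) / m x ≤ B) :
    ∃ C : ℝ, 0 ≤ C ∧ ∀ f : X → ℝ,
      energy b p (K.indicator f) ≤
        ENNReal.ofReal C * ∑' x : K, ENNReal.ofReal (|f (x : X)| ^ p * m x) := by
  classical
  have hp0 : (0:ℝ) < p := lt_of_lt_of_le one_pos hp
  set B' := max B 0 with hB'def
  have hB'0 : 0 ≤ B' := le_max_right _ _
  have h2 : (0:ℝ) < 2 := two_pos
  refine ⟨(1/p) * (2 ^ p * B'), by positivity, fun f => ?_⟩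
  set g := K.indicator f with hg
  have hgnn : ∀ x, 0 ≤ |g x| ^ p := fun x => Real.rpow_nonneg (abs_nonneg _) _
  -- pointwise bound
  have key : ∀ z : X × X, ENNReal.ofReal (b z.1 z.2 * |g z.1 - g z.2| ^ p) ≤
      ENNReal.ofReal (2 ^ (p-1)) * (ENNReal.ofReal (b z.1 z.2 * |g z.1| ^ p)
        + ENNReal.ofReal (b z.1 z.2 * |g z.2| ^ p)) := by
    intro z
    rw [← ENNReal.ofReal_add (mul_nonneg (hb_nonneg _ _) (hgnn _))
        (mul_nonneg (hb_nonneg _ _) (hgnn _)),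
      ← ENNReal.ofReal_mul (by positivity)]
    apply ENNReal.ofReal_le_ofReal
    calc b z.1 z.2 * |g z.1 - g z.2| ^ p
        ≤ b z.1 z.2 * (2 ^ (p-1) * (|g z.1| ^ p + |g z.2| ^ p)) :=
          mul_le_mul_of_nonneg_left (real_rpow_key hp _ _) (hb_nonneg _ _)
      _ = 2 ^ (p-1) * (b z.1 z.2 * |g z.1| ^ p + b z.1 z.2 * |g z.2| ^ p) := by ring
  set S1 : ℝ≥0∞ := ∑' z : X × X, ENNReal.ofReal (b z.1 z.2 * |g z.1| ^ p) with hS1def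
  have hswap : (∑' z : X × X, ENNReal.ofReal (b z.1 z.2 * |g z.2| ^ p)) = S1 := by
    rw [hS1def, ← (Equiv.prodComm X X).tsum_eq
      (fun z : X × X => ENNReal.ofReal (b z.1 z.2 * |g z.1| ^ p))]
    exact tsum_congr fun z => by simp [hb_symm z.1 z.2]
  have hT : (∑' z : X × X, ENNReal.ofReal (b z.1 z.2 * |g z.1 - g z.2| ^ p)) ≤
      ENNReal.ofReal (2 ^ (p-1)) * (2 * S1) := by
    calc (∑' z : X × X, ENNReal.ofReal (b z.1 z.2 * |g z.1 - g z.2| ^ p))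
        ≤ ∑' z : X × X, ENNReal.ofReal (2 ^ (p-1)) * (ENNReal.ofReal (b z.1 z.2 * |g z.1| ^ p)
            + ENNReal.ofReal (b z.1 z.2 * |g z.2| ^ p)) :=
          ENNReal.tsum_le_tsum key
      _ = ENNReal.ofReal (2 ^ (p-1)) * (S1 + S1) := by
          rw [ENNReal.tsum_mul_left, ENNReal.tsum_add, hswap]
      _ = ENNReal.ofReal (2 ^ (p-1)) * (2 * S1) := by rw [two_mul]
  -- compute S1 as a single sum
  have hS1 : S1 = ∑' x, ENNReal.ofReal ((∑' y, b x y) * |g x| ^ p) := by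
    rw [hS1def, ENNReal.tsum_prod (f := fun x y => ENNReal.ofReal (b x y * |g x| ^ p))]
    refine tsum_congr fun x => ?_
    have h1 : ∀ y, ENNReal.ofReal (b x y * |g x| ^ p)
        = ENNReal.ofReal (b x y) * ENNReal.ofReal (|g x| ^ p) :=
      fun y => ENNReal.ofReal_mul (hb_nonneg x y)
    rw [tsum_congr h1, ENNReal.tsum_mul_right, ← ENNReal.ofReal_tsum_of_nonneg (fun y => hb_nonneg x y) (hb_sum x),
      ← ENNReal.ofReal_mul (tsum_nonneg fun y => hb_nonneg x y)]
  set M : ℝ≥0∞ := ∑' x : K, ENNReal.ofReal (|f (x : X)| ^ p * m x) with hMdef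
  have hS2 : (∑' x, ENNReal.ofReal ((∑' y, b x y) * |g x| ^ p)) ≤ ENNReal.ofReal B' * M := by
    rw [hMdef, ← ENNReal.tsum_mul_left,
      show (∑' x : K, ENNReal.ofReal B' * ENNReal.ofReal (|f (x : X)| ^ p * m x)) =
        ∑' x, K.indicator (fun x => ENNReal.ofReal B' * ENNReal.ofReal (|f x| ^ p * m x)) x from
        tsum_subtype K (fun x => ENNReal.ofReal B' * ENNReal.ofReal (|f x| ^ p * m x))]
    refine ENNReal.tsum_le_tsum fun x => ?_
    by_cases hx : x ∈ K
    · rw [Set.indicator_of_mem hx]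
      have hgx : g x = f x := Set.indicator_of_mem hx f
      rw [hgx, ← ENNReal.ofReal_mul hB'0]
      apply ENNReal.ofReal_le_ofReal
      have hd : (∑' y, b x y) ≤ B' * m x := by
        have := hB x hx
        rw [div_le_iff₀ (hm x)] at this
        exact this.trans (mul_le_mul_of_nonneg_right (le_max_left _ _) (hm x).le)
      calc (∑' y, b x y) * |f x| ^ p ≤ (B' * m x) * |f x| ^ p :=
            mul_le_mul_of_nonneg_right hd (Real.rpow_nonneg (abs_nonneg _) _)
        _ = B' * (|f x| ^ p * m x) := by ring
    · have hgx : g x = 0 := Set.indicator_of_notMem hx f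
      rw [hgx]
      simp [Real.zero_rpow hp0.ne']
  -- assemble
  have hconst : ENNReal.ofReal (1/p) * (ENNReal.ofReal (2 ^ (p-1)) * (2 * (ENNReal.ofReal B' * M)))
      = ENNReal.ofReal ((1/p) * (2 ^ p * B')) * M := by
    have h2e : (2 : ℝ≥0∞) = ENNReal.ofReal 2 := by norm_num
    have hp2 : (0:ℝ) ≤ 2 ^ (p-1) := by positivity
    calc ENNReal.ofReal (1/p) * (ENNReal.ofReal (2 ^ (p-1)) * (2 * (ENNReal.ofReal B' * M)))
        = (ENNReal.ofReal (1/p) * (ENNReal.ofReal (2 ^ (p-1)) * (ENNReal.ofReal 2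
            * ENNReal.ofReal B'))) * M := by rw [h2e]; ring
      _ = ENNReal.ofReal ((1/p) * (2 ^ p * B')) * M := by
          rw [← ENNReal.ofReal_mul (by norm_num), ← ENNReal.ofReal_mul hp2,
            ← ENNReal.ofReal_mul (by positivity)]
          congr 1
          have h21 : (2:ℝ) ^ (p - 1) = 2 ^ p / 2 := by
            rw [Real.rpow_sub h2, Real.rpow_one]
          rw [h21]; ring
  calc energy b p g = ENNReal.ofReal (1/p)
        * ∑' z : X × X, ENNReal.ofReal (b z.1 z.2 * |g z.1 - g z.2| ^ p) := rfl
    _ ≤ ENNReal.ofReal (1/p) * (ENNReal.ofReal (2 ^ (p-1)) * (2 * S1)) :=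
        mul_le_mul_right hT _
    _ ≤ ENNReal.ofReal (1/p) * (ENNReal.ofReal (2 ^ (p-1)) * (2 * (ENNReal.ofReal B' * M))) := by
        rw [hS1] at *
        exact mul_le_mul_right (mul_le_mul_right (mul_le_mul_right hS2 _) _) _
    _ = ENNReal.ofReal ((1/p) * (2 ^ p * B')) * M := hconst
end

section
/- Let f: X → (0,∞) with f ∈ F_{p+1}. Then f ∈ F_p and for all x ∈ X: 2f(x)·Lf(x) = |∇f|^p(x) + (1/m(x)) ∑_y b(x,y)(f(x)+f(y))(f(x)-f(y))|f(x)-f(y)|^{p-2}, with all sums converging absolutely. -/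
lemma abs_mul_rpow' (d q : ℝ) (hq : q ≠ 0) : |d| * |d| ^ (q - 1) = |d| ^ q := by
  rcases eq_or_ne d 0 with h | h
  · simp [h, Real.zero_rpow hq]
  · have hpos := abs_pos.mpr h
    conv_rhs => rw [show q = 1 + (q - 1) by ring]
    rw [Real.rpow_add hpos, Real.rpow_one]

lemma sq_mul_rpow (d p : ℝ) (hp : 1 < p) : d ^ 2 * |d| ^ (p - 2) = |d| ^ p := by
  rw [show p - 2 = p - 1 - 1 by ring, ← sq_abs, sq, mul_assoc,
    abs_mul_rpow' d (p - 1) (by linarith), abs_mul_rpow' d p (by linarith)]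

lemma key (p u v : ℝ) (hp : 1 < p) :
    2 * u * ((u - v) * |u - v| ^ (p - 2)) =
      |u - v| ^ p + (u + v) * ((u - v) * |u - v| ^ (p - 2)) := by
  rw [← sq_mul_rpow (u - v) p hp]; ring

/-- The formal domain `F_r` of the `r`-Laplacian of a weighted graph. -/
def formalDomain {X : Type*} (b : X → X → ℝ) (r : ℝ) : Set (X → ℝ) :=
  {f | ∀ x, Summable fun y => b x y * |f x - f y| ^ (r - 1)}

/-- The formal `p`-Laplacian. -/
noncomputable def pLap {X : Type*} (b : X → X → ℝ) (m : X → ℝ) (p : ℝ)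
    (f : X → ℝ) (x : X) : ℝ :=
  (m x)⁻¹ * ∑' y, b x y * (f x - f y) * |f x - f y| ^ (p - 2)

/-- `|∇f|^p(x) = (1/m(x)) ∑_y b(x,y)|f(x)-f(y)|^p` (real-valued). -/
noncomputable def gradPowR {X : Type*} (b : X → X → ℝ) (m : X → ℝ) (p : ℝ)
    (f : X → ℝ) (x : X) : ℝ :=
  (m x)⁻¹ * ∑' y, b x y * |f x - f y| ^ p

/-- For positive `f ∈ F_{p+1}`: `f ∈ F_p` and
`2 f(x) L f(x) = |∇f|^p(x) + (1/m(x)) ∑_y b(x,y)(f(x)+f(y))(f(x)-f(y))|f(x)-f(y)|^{p-2}`,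
with the sums converging absolutely. -/
theorem two_f_pLap_eq {X : Type*} [Countable X] (b : X → X → ℝ)
    (hb_symm : ∀ x y, b x y = b y x) (hb_nonneg : ∀ x y, 0 ≤ b x y)
    (hb_diag : ∀ x, b x x = 0) (hb_sum : ∀ x, Summable fun y => b x y)
    (m : X → ℝ) (hm : ∀ x, 0 < m x) (p : ℝ) (hp : 1 < p)
    (f : X → ℝ) (hf_pos : ∀ x, 0 < f x) (hf : f ∈ formalDomain b (p + 1)) :
    f ∈ formalDomain b p ∧ ∀ x : X,
      Summable (fun y => b x y * ((f x + f y) * (f x - f y) * |f x - f y| ^ (p - 2))) ∧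
      2 * f x * pLap b m p f x =
        gradPowR b m p f x +
          (m x)⁻¹ * ∑' y, b x y * ((f x + f y) * (f x - f y) * |f x - f y| ^ (p - 2)) := by
  -- summability of `b x y * |d|^p` (from `f ∈ F_{p+1}`)
  have hgp : ∀ x, Summable fun y => b x y * |f x - f y| ^ p := by
    intro x
    have h1 := hf x
    simpa using h1
  -- `f ∈ F_p`
  have hFp : ∀ x, Summable fun y => b x y * |f x - f y| ^ (p - 1) := by
    intro x
    refine Summable.of_nonneg_of_le
      (fun y => mul_nonneg (hb_nonneg x y) (Real.rpow_nonneg (abs_nonneg _) _))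
      (fun y => ?_) ((hb_sum x).add (hgp x))
    have hle : |f x - f y| ^ (p - 1) ≤ 1 + |f x - f y| ^ p := by
      rcases le_total |f x - f y| 1 with h | h
      · have h1 : |f x - f y| ^ (p - 1) ≤ 1 :=
          Real.rpow_le_one (abs_nonneg _) h (by linarith)
        have h2 : (0:ℝ) ≤ |f x - f y| ^ p := Real.rpow_nonneg (abs_nonneg _) _
        linarith
      · have h1 : |f x - f y| ^ (p - 1) ≤ |f x - f y| ^ p :=
          Real.rpow_le_rpow_of_exponent_le h (by linarith)
        linarith
    calc b x y * |f x - f y| ^ (p - 1) ≤ b x y * (1 + |f x - f y| ^ p) :=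
          mul_le_mul_of_nonneg_left hle (hb_nonneg x y)
      _ = b x y + b x y * |f x - f y| ^ p := by ring
  refine ⟨hFp, fun x => ?_⟩
  -- abs of the cross term
  have habs3 : ∀ y, |b x y * ((f x + f y) * (f x - f y) * |f x - f y| ^ (p - 2))| =
      b x y * ((f x + f y) * |f x - f y| ^ (p - 1)) := by
    intro y
    have hfs : (0:ℝ) ≤ f x + f y := by
      have := (hf_pos x).le; have := (hf_pos y).le; linarith
    rw [abs_mul, abs_of_nonneg (hb_nonneg x y), abs_mul, abs_mul,
      abs_of_nonneg hfs, abs_of_nonneg (Real.rpow_nonneg (abs_nonneg _) _),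
      mul_assoc, show p - 2 = p - 1 - 1 by ring,
      abs_mul_rpow' (f x - f y) (p - 1) (by linarith)]
  -- summability of the cross term
  have hg3 : Summable
      (fun y => b x y * ((f x + f y) * (f x - f y) * |f x - f y| ^ (p - 2))) := by
    rw [← summable_abs_iff]
    refine Summable.of_nonneg_of_le (fun y => abs_nonneg _) (fun y => ?_)
      (((hFp x).mul_left (2 * f x)).add (hgp x))
    rw [habs3 y]
    have hfy : f y ≤ f x + |f x - f y| := by
      have := le_abs_self (f y - f x)
      rw [abs_sub_comm] at this; linarith
    have hA : (0:ℝ) ≤ |f x - f y| ^ (p - 1) := Real.rpow_nonneg (abs_nonneg _) _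
    have h1 : (f x + f y) * |f x - f y| ^ (p - 1) ≤
        (2 * f x + |f x - f y|) * |f x - f y| ^ (p - 1) :=
      mul_le_mul_of_nonneg_right (by linarith) hA
    have h2 : (2 * f x + |f x - f y|) * |f x - f y| ^ (p - 1) =
        2 * f x * |f x - f y| ^ (p - 1) + |f x - f y| ^ p := by
      rw [add_mul, abs_mul_rpow' (f x - f y) p (by linarith)]
    calc b x y * ((f x + f y) * |f x - f y| ^ (p - 1))
        ≤ b x y * (2 * f x * |f x - f y| ^ (p - 1) + |f x - f y| ^ p) := by
          refine mul_le_mul_of_nonneg_left ?_ (hb_nonneg x y)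
          rw [← h2]; exact h1
      _ = 2 * f x * (b x y * |f x - f y| ^ (p - 1)) + b x y * |f x - f y| ^ p := by ring
  refine ⟨hg3, ?_⟩
  -- pointwise identity
  have hpt : ∀ y, 2 * f x * (b x y * (f x - f y) * |f x - f y| ^ (p - 2)) =
      b x y * |f x - f y| ^ p +
        b x y * ((f x + f y) * (f x - f y) * |f x - f y| ^ (p - 2)) := by
    intro y
    have h := key p (f x) (f y) hp
    calc 2 * f x * (b x y * (f x - f y) * |f x - f y| ^ (p - 2))
        = b x y * (2 * f x * ((f x - f y) * |f x - f y| ^ (p - 2))) := by ring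
      _ = b x y * (|f x - f y| ^ p +
            (f x + f y) * ((f x - f y) * |f x - f y| ^ (p - 2))) := by rw [h]
      _ = _ := by ring
  calc 2 * f x * pLap b m p f x
      = (m x)⁻¹ * ∑' y, 2 * f x * (b x y * (f x - f y) * |f x - f y| ^ (p - 2)) := by
        rw [pLap, tsum_mul_left]; ring
    _ = (m x)⁻¹ * ∑' y, (b x y * |f x - f y| ^ p +
          b x y * ((f x + f y) * (f x - f y) * |f x - f y| ^ (p - 2))) := by
        rw [tsum_congr hpt]
    _ = (m x)⁻¹ * ((∑' y, b x y * |f x - f y| ^ p) +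
          ∑' y, b x y * ((f x + f y) * (f x - f y) * |f x - f y| ^ (p - 2))) := by
        rw [Summable.tsum_add (hgp x) hg3]
    _ = _ := by rw [gradPowR, mul_add]
end

section
/- On a connected locally finite tree with root o and path metric d_w (w > 0 on edges), for each point x of the metric boundary ∂X (completion minus X) there exists an infinite injective path (x_n) converging to x such that x_m is an ancestor of x_n for m ≤ n; in particular d_w(x_n,x_m) = ∑_{k=m}^{n-1} w(x_k,x_{k+1}) for n > m. -/
/-!
Call a vertex `v` a ray vertex if it lies on the geodesic from `o` to every `a` close
enough to the boundary point `ξ`. Since `v ≠ ξ`, points near `ξ` are far from `v` but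
close to each other, so the geodesic between two of them cannot pass through `v`: hence
all their geodesics from `o` leave `v` through the same edge, whose other end is again a
ray vertex. Iterating from the root gives a descending path of ray vertices. It converges
to `ξ` because it eventually leaves the geodesic from `o` to any vertex `b`, and a ray
vertex off that geodesic is at least as close to `ξ` as `b` is.
-/

open Filter Topology

/-- The `w`-length of a walk in a simple graph. -/
noncomputable def walkLength {X : Type*} {G : SimpleGraph X} (w : X → X → ℝ) {x y : X}
    (q : G.Walk x y) : ℝ :=
  (q.darts.map fun d => w d.toProd.1 d.toProd.2).sum

open Function

section WalkLength

variable {V : Type*} {G : SimpleGraph V} {w : V → V → ℝ}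

lemma walkLength_append {u v x : V} (p : G.Walk u v) (q : G.Walk v x) :
    walkLength w (p.append q) = walkLength w p + walkLength w q := by
  simp [walkLength]

lemma walkLength_nonneg (hw : ∀ x y, 0 ≤ w x y) {u v : V} (p : G.Walk u v) :
    0 ≤ walkLength w p :=
  List.sum_nonneg (by simp [hw])

lemma walkLength_bypass_le [DecidableEq V] (hw : ∀ x y, 0 ≤ w x y) {u v : V}
    (p : G.Walk u v) : walkLength w p.bypass ≤ walkLength w p :=
  (p.darts_bypass_sublist_darts.map _).sum_le_sum (by simp [hw])

end WalkLength

namespace SimpleGraph.IsTree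

variable {V : Type*} {G : SimpleGraph V} (hT : G.IsTree)

noncomputable def path (a b : V) : G.Walk a b :=
  (hT.existsUnique_path a b).choose

lemma isPath_path (a b : V) : (hT.path a b).IsPath :=
  (hT.existsUnique_path a b).choose_spec.1

lemma eq_path {a b : V} {p : G.Walk a b} (hp : p.IsPath) : p = hT.path a b :=
  (hT.existsUnique_path a b).choose_spec.2 p hp

lemma mem_support_path_comm {a b u : V} :
    u ∈ (hT.path a b).support ↔ u ∈ (hT.path b a).support := by
  rw [← hT.eq_path (hT.isPath_path a b).reverse, Walk.support_reverse, List.mem_reverse]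

lemma path_append_path {a b c : V} (hc : c ∈ (hT.path a b).support) :
    (hT.path a c).append (hT.path c b) = hT.path a b := by
  classical
  rw [← hT.eq_path ((hT.isPath_path a b).takeUntil hc),
    ← hT.eq_path ((hT.isPath_path a b).dropUntil hc), Walk.take_spec]

lemma support_path_eq_append {o a v : V} (hv : v ∈ (hT.path o a).support) :
    (hT.path o a).support = (hT.path o v).support ++ (hT.path v a).support.tail := by
  rw [← hT.path_append_path hv, Walk.support_append]

lemma mem_support_path_of_mem_left {a b c u : V} (hc : c ∈ (hT.path a b).support)
    (hu : u ∈ (hT.path a c).support) : u ∈ (hT.path a b).support := by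
  rw [← hT.path_append_path hc, Walk.mem_support_append_iff]
  exact .inl hu

lemma mem_support_path_of_mem_right {a b c u : V} (hc : c ∈ (hT.path a b).support)
    (hu : u ∈ (hT.path c b).support) : u ∈ (hT.path a b).support := by
  rw [← hT.path_append_path hc, Walk.mem_support_append_iff]
  exact .inr hu

lemma notMem_support_path_of_mem_tail {o a v u : V} (hv : v ∈ (hT.path o a).support)
    (hu : u ∈ (hT.path v a).support.tail) : u ∉ (hT.path o v).support := by
  have hnodup := (hT.isPath_path o a).support_nodup
  rw [hT.support_path_eq_append hv] at hnodup
  exact fun h => List.disjoint_of_nodup_append hnodup h hu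

/-- A vertex of the geodesic `[r, a]` off `[r, b]` lies beyond the branch point of `a` and `b`. -/
lemma mem_support_path_of_notMem {r a b z : V} (hza : z ∈ (hT.path r a).support)
    (hzb : z ∉ (hT.path r b).support) : z ∈ (hT.path a b).support := by
  classical
  have hbypass : ((hT.path r b).append (hT.path b a)).bypass = hT.path r a :=
    hT.eq_path (Walk.bypass_isPath _)
  have hz := (Walk.mem_support_append_iff _ _).1
    (Walk.support_bypass_subset_support _ (hbypass ▸ hza))
  exact hT.mem_support_path_comm.1 (hz.resolve_left hzb)

lemma mem_support_path_of_adj {o a b v c : V} (hadj : G.Adj v c)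
    (hca : c ∈ (hT.path o a).support) (hcb : c ∉ (hT.path o b).support)
    (hvb : v ∈ (hT.path o b).support) : v ∈ (hT.path a b).support := by
  have hcvb : c ∉ (hT.path b v).support := fun h =>
    hcb (hT.mem_support_path_of_mem_right hvb (hT.mem_support_path_comm.1 h))
  have hvbc : v ∈ (hT.path b c).support :=
    hT.isAcyclic.mem_support_of_ne_mem_support_of_adj_of_isPath (hT.isPath_path b c)
      (hT.isPath_path b v) hadj.symm hcvb
  exact hT.mem_support_path_of_mem_right (hT.mem_support_path_of_notMem hca hcb)
    (hT.mem_support_path_comm.1 hvbc)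

lemma mem_support_of_mem_support_path {a b u : V} (hu : u ∈ (hT.path a b).support)
    (q : G.Walk a b) : u ∈ q.support := by
  classical
  rw [← hT.eq_path q.bypass_isPath] at hu
  exact q.support_bypass_subset_support hu

variable (o : V)

def IsDescending (x : ℕ → V) : Prop :=
  ∀ n, G.Adj (x n) (x (n + 1)) ∧ x (n + 1) ∉ (hT.path o (x n)).support

variable {hT o} {x : ℕ → V}

lemma IsDescending.mem_support_path (hx : hT.IsDescending o x) {m n : ℕ} (hmn : m ≤ n) :
    x m ∈ (hT.path o (x n)).support := by
  induction n, hmn using Nat.le_induction with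
  | base => exact Walk.end_mem_support _
  | succ n _ ih =>
    have hparent : x n ∈ (hT.path o (x (n + 1))).support :=
      hT.isAcyclic.mem_support_of_ne_mem_support_of_adj_of_isPath (hT.isPath_path _ _)
        (hT.isPath_path _ _) (hx n).1.symm (hx n).2
    exact hT.mem_support_path_of_mem_left hparent ih

lemma IsDescending.injective (hx : hT.IsDescending o x) : Injective x :=
  .of_lt_imp_ne fun m _ hmn heq => (hx m).2 (heq ▸ hx.mem_support_path hmn)

variable (hT o) in
/-- The vertex set of the geodesic ray from `o` to `ξ`. -/
def ray {Y : Type*} [TopologicalSpace Y] (ι : V → Y) (ξ : Y) : Set V :=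
  {v | ∀ᶠ a in comap ι (𝓝 ξ), v ∈ (hT.path o a).support}

variable (hT) in
lemma mem_ray {Y : Type*} [TopologicalSpace Y] {ι : V → Y} {ξ : Y} {v : V} :
    v ∈ hT.ray o ι ξ ↔ ∀ᶠ a in comap ι (𝓝 ξ), v ∈ (hT.path o a).support :=
  Iff.rfl

variable (hT o) in
lemma root_mem_ray {Y : Type*} [TopologicalSpace Y] {ι : V → Y} {ξ : Y} :
    o ∈ hT.ray o ι ξ :=
  (hT.mem_ray).2 <| .of_forall fun a => (hT.path o a).start_mem_support

end SimpleGraph.IsTree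

section Metric

open SimpleGraph (Walk Path)

variable {V : Type*} {G : SimpleGraph V} [MetricSpace V] {w : V → V → ℝ}

lemma dist_eq_walkLength_path (hT : G.IsTree) (hw : ∀ x y, 0 ≤ w x y)
    (hdist : ∀ a b : V, dist a b = sInf {L : ℝ | ∃ q : G.Walk a b, L = walkLength w q})
    (a b : V) : dist a b = walkLength w (hT.path a b) := by
  classical
  rw [hdist]
  refine le_antisymm (csInf_le ⟨0, ?_⟩ ⟨hT.path a b, rfl⟩)
    (le_csInf ⟨_, hT.path a b, rfl⟩ ?_)
  · rintro _ ⟨q, rfl⟩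
    exact walkLength_nonneg hw q
  · rintro _ ⟨q, rfl⟩
    rw [← hT.eq_path q.bypass_isPath]
    exact walkLength_bypass_le hw q

variable {hT : G.IsTree} (hgeo : ∀ a b, dist a b = walkLength w (hT.path a b))
include hgeo

lemma dist_add_dist_of_mem_path {a b c : V} (hc : c ∈ (hT.path a b).support) :
    dist a c + dist c b = dist a b := by
  rw [hgeo, hgeo, hgeo, ← walkLength_append, hT.path_append_path hc]

lemma dist_of_adj {a b : V} (h : G.Adj a b) : dist a b = w a b := by
  rw [hgeo, ← hT.eq_path (Path.singleton h).2]
  simp [walkLength]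

lemma dist_eq_sum_of_isDescending {o : V} {x : ℕ → V} (hx : hT.IsDescending o x) {m n : ℕ}
    (hmn : m ≤ n) : dist (x m) (x n) = ∑ k ∈ Finset.Ico m n, w (x k) (x (k + 1)) := by
  induction n, hmn using Nat.le_induction with
  | base => simp
  | succ n hmn ih =>
    have h₁ := dist_add_dist_of_mem_path hgeo (hx.mem_support_path hmn)
    have h₂ := dist_add_dist_of_mem_path hgeo (hx.mem_support_path (hmn.trans n.le_succ))
    have h₃ := dist_add_dist_of_mem_path hgeo (hx.mem_support_path n.le_succ)
    rw [Finset.sum_Ico_succ_top hmn, ← ih, ← dist_of_adj hgeo (hx n).1]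
    linarith

variable {Y : Type*} [MetricSpace Y] {ι : V → Y} (hι : Isometry ι) {ξ : Y}
  [(comap ι (𝓝 ξ)).NeBot] {o : V}
include hι

lemma exists_adj_mem_ray (hξ : ξ ∉ Set.range ι) {v : V} (hv : v ∈ hT.ray o ι ξ) :
    ∃ c ∈ hT.ray o ι ξ, G.Adj v c ∧ c ∉ (hT.path o v).support := by
  set δ := dist (ι v) ξ
  have hδ : 0 < δ := dist_pos.2 fun h => hξ ⟨v, h⟩
  have hnear :
      ∀ᶠ a in comap ι (𝓝 ξ), dist (ι a) ξ < δ / 4 ∧ v ∈ (hT.path o a).support :=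
    (tendsto_comap.eventually (Metric.ball_mem_nhds ξ (by positivity))).and (hT.mem_ray.1 hv)
  obtain ⟨a₀, ha₀, hva₀⟩ := hnear.exists
  have hfar : 3 * δ / 4 < dist v a₀ := by
    have := dist_triangle (ι v) (ι a₀) ξ
    rw [hι.dist_eq] at this
    linarith
  have hne : ¬(hT.path v a₀).Nil :=
    Walk.not_nil_of_ne fun h => by rw [h, dist_self] at hfar; linarith
  have hadj := Walk.adj_snd hne
  have htail := Walk.snd_mem_tail_support hne
  refine ⟨_, ?_, hadj, hT.notMem_support_path_of_mem_tail hva₀ htail⟩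
  have hca₀ : (hT.path v a₀).snd ∈ (hT.path o a₀).support := by
    rw [hT.support_path_eq_append hva₀]
    exact List.mem_append_right _ htail
  filter_upwards [hnear] with a ⟨ha, hva⟩
  by_contra hca
  -- otherwise the geodesic between `a₀` and `a`, both near `ξ`, runs through `v`
  have hv_between := dist_add_dist_of_mem_path hgeo
    (hT.mem_support_path_of_adj hadj hca₀ hca hva)
  have hclose := dist_triangle_right (ι a₀) (ι a) ξ
  rw [hι.dist_eq] at hclose
  linarith [dist_nonneg (x := v) (y := a), dist_comm v a₀]

lemma dist_le_of_mem_ray {v b : V} (hv : v ∈ hT.ray o ι ξ)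
    (hvb : v ∉ (hT.path o b).support) : dist (ι v) ξ ≤ dist (ι b) ξ := by
  have hlim : Tendsto (fun a => dist (ι b) ξ + 2 * dist (ι a) ξ) (comap ι (𝓝 ξ))
      (𝓝 (dist (ι b) ξ)) := by
    simpa using tendsto_const_nhds.add
      ((tendsto_iff_dist_tendsto_zero.1 tendsto_comap).const_mul 2)
  refine ge_of_tendsto hlim ((hT.mem_ray.1 hv).mono fun a hva => ?_)
  have hv_between := dist_add_dist_of_mem_path hgeo (hT.mem_support_path_of_notMem hva hvb)
  have h₁ := dist_triangle (ι v) (ι a) ξ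
  have h₂ := dist_triangle_right (ι a) (ι b) ξ
  rw [hι.dist_eq] at h₁ h₂
  linarith [dist_nonneg (x := v) (y := b), dist_comm v a]

lemma tendsto_of_mem_ray {x : ℕ → V} (hinj : Injective x) (hx : ∀ n, x n ∈ hT.ray o ι ξ) :
    Tendsto (ι ∘ x) atTop (𝓝 ξ) := by
  refine Metric.tendsto_nhds.2 fun ε hε => ?_
  obtain ⟨b, hb⟩ := ((tendsto_comap (f := ι)).eventually (Metric.ball_mem_nhds ξ hε)).exists
  have hleave : ∀ᶠ n in atTop, x n ∉ (hT.path o b).support :=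
    Nat.cofinite_eq_atTop ▸ hinj.tendsto_cofinite.eventually
      (hT.path o b).support.finite_toSet.eventually_cofinite_notMem
  exact hleave.mono fun n hn => (dist_le_of_mem_ray hgeo hι (hx n) hn).trans_lt hb

lemma exists_isDescending_mem_ray (o : V) (hξ : ξ ∉ Set.range ι) :
    ∃ x : ℕ → V, hT.IsDescending o x ∧ ∀ n, x n ∈ hT.ray o ι ξ := by
  choose f hf_mem hf using fun v : hT.ray o ι ξ => exists_adj_mem_ray hgeo hι hξ v.2
  let s : ℕ → hT.ray o ι ξ := fun n =>
    (fun v => ⟨f v, hf_mem v⟩)^[n] ⟨o, hT.root_mem_ray o⟩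
  refine ⟨fun n => s n, fun n => ?_, fun n => (s n).2⟩
  simp only [s, iterate_succ_apply']
  exact hf _

end Metric

theorem tree_boundary_monotone_path_general {X : Type*} [MetricSpace X]
    (G : SimpleGraph X) (hT : G.IsTree)
    (o : X) (w : X → X → ℝ)
    (hw_nonneg : ∀ x y, 0 ≤ w x y)
    (hdist : ∀ x y : X, dist x y = sInf {L : ℝ | ∃ q : G.Walk x y, L = walkLength w q})
    (ξ : UniformSpace.Completion X)
    (hξ : ξ ∉ Set.range ((↑) : X → UniformSpace.Completion X)) :
    ∃ x : ℕ → X, Function.Injective x ∧ (∀ n, G.Adj (x n) (x (n + 1))) ∧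
      Tendsto (fun n => ((x n : UniformSpace.Completion X))) atTop (𝓝 ξ) ∧
      (∀ m n : ℕ, m ≤ n → ∀ q : G.Walk (x n) o, x m ∈ q.support) ∧
      (∀ m n : ℕ, m < n → dist (x n) (x m) = ∑ k ∈ Finset.Ico m n, w (x k) (x (k + 1))) := by
  have hgeo := dist_eq_walkLength_path hT hw_nonneg hdist
  have hι := UniformSpace.Completion.coe_isometry (α := X)
  have := UniformSpace.Completion.isDenseInducing_coe.comap_nhds_neBot ξ
  obtain ⟨x, hx, hray⟩ := exists_isDescending_mem_ray hgeo hι o hξ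
  refine ⟨x, hx.injective, fun n => (hx n).1, tendsto_of_mem_ray hgeo hι hx.injective hray,
    fun m n hmn q => ?_, fun m n hmn => ?_⟩
  · simpa using hT.mem_support_of_mem_support_path (hx.mem_support_path hmn) q.reverse
  · rw [dist_comm]
    exact dist_eq_sum_of_isDescending hgeo hx hmn.le

/-- On a connected locally finite tree with path metric `d_w`, every point of the
metric boundary is the limit of an infinite injective path `(x_n)` such that `x_m`
is an ancestor of `x_n` for `m ≤ n` (every walk from `x_n` to the root passes through
`x_m`); in particular `d_w(x_n, x_m) = ∑_{k=m}^{n-1} w(x_k, x_{k+1})` for `n > m`. -/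
theorem tree_boundary_monotone_path {X : Type*} [Countable X] [MetricSpace X]
    (G : SimpleGraph X) (hT : G.IsTree) (hlf : ∀ x : X, (G.neighborSet x).Finite)
    (o : X) (w : X → X → ℝ) (hw_symm : ∀ x y, w x y = w y x)
    (hw_nonneg : ∀ x y, 0 ≤ w x y) (hw_pos : ∀ x y, G.Adj x y → 0 < w x y)
    (hdist : ∀ x y : X, dist x y = sInf {L : ℝ | ∃ q : G.Walk x y, L = walkLength w q})
    (ξ : UniformSpace.Completion X)
    (hξ : ξ ∉ Set.range ((↑) : X → UniformSpace.Completion X)) :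
    ∃ x : ℕ → X, Function.Injective x ∧ (∀ n, G.Adj (x n) (x (n + 1))) ∧
      Tendsto (fun n => ((x n : UniformSpace.Completion X))) atTop (𝓝 ξ) ∧
      (∀ m n : ℕ, m ≤ n → ∀ q : G.Walk (x n) o, x m ∈ q.support) ∧
      (∀ m n : ℕ, m < n → dist (x n) (x m) = ∑ k ∈ Finset.Ico m n, w (x k) (x (k + 1))) :=
  tree_boundary_monotone_path_general G hT o w hw_nonneg hdist ξ hξ
end
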